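/- arXiv:2307.14129 — 7 statements merged into one kernel-verified Lean document; each statement's English description precedes it below -/
import Mathlib

section
/- Let a, b, ζ, γ > 0 be real numbers and let δ^a, δ^b ∈ ℝ satisfy δ^a + δ^b < 0 (i.e. the quoted ask price S+δ^a lies strictly below the quoted bid price S−δ^b). Set y = −(δ^a+δ^b)/(1+a/b), δ̃^a = δ^a + y and δ̃^b = δ^b + y·(a/b). Then: (i) δ̃^a + δ̃^b = 0; (ii) the inventory drift is unchanged: −a(ζ−γδ̃^a) + b(ζ−γδ̃^b) = −a(ζ−γδ^a) + b(ζ−γδ^b); (iii) the instantaneous spread revenue strictly increases: δ̃^a·a(ζ−γδ̃^a) + δ̃^b·b(ζ−γδ̃^b) − δ^a·a(ζ−γδ^a) − δ^b·b(ζ−γδ^b) = −(a·b·(δ^a+δ^b)/(a+b))·(2ζ − γ(δ^a+δ^b)) > 0. Hence any quote with crossed prices is strictly dominated by one whose ask price is not smaller than its bid price. -/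
/-- **Dominance of non-crossed quotes in the linear-intensity macroscopic market making
model.** If the quoted ask lies strictly below the quoted bid (`δa + δb < 0`), then the
modified quote `(δa + y, δb + y * (a / b))` with `y = -(δa + δb)/(1 + a/b)` has zero total
displacement, the same inventory drift, and strictly larger instantaneous spread revenue. -/
theorem crossed_quotes_dominated
    (a b ζ γ δa δb y δa' δb' : ℝ)
    (ha : 0 < a) (hb : 0 < b) (hζ : 0 < ζ) (hγ : 0 < γ)
    (hcross : δa + δb < 0)
    (hy : y = -(δa + δb) / (1 + a / b))
    (hδa' : δa' = δa + y)
    (hδb' : δb' = δb + y * (a / b)) :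
    -- (i) the new quotes are not crossed: total displacement is zero
    δa' + δb' = 0 ∧
    -- (ii) the inventory drift is unchanged
    (-(a * (ζ - γ * δa')) + b * (ζ - γ * δb')
      = -(a * (ζ - γ * δa)) + b * (ζ - γ * δb)) ∧
    -- (iii) the instantaneous spread revenue strictly increases, with explicit gap
    (δa' * (a * (ζ - γ * δa')) + δb' * (b * (ζ - γ * δb'))
        - δa * (a * (ζ - γ * δa)) - δb * (b * (ζ - γ * δb))
      = -(a * b * (δa + δb) / (a + b)) * (2 * ζ - γ * (δa + δb))) ∧
    0 < -(a * b * (δa + δb) / (a + b)) * (2 * ζ - γ * (δa + δb)) := by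

  have hb' : b ≠ 0 := ne_of_gt hb
  have hab : a + b ≠ 0 := ne_of_gt (by linarith)
  have hden : 1 + a / b = (a + b) / b := by field_simp; ring
  have hy' : y = -(δa + δb) * b / (a + b) := by
    rw [hy, hden]; field_simp
  subst hδa' hδb'
  refine ⟨?_, ?_, ?_, ?_⟩
  · rw [hy']; field_simp; ring
  · rw [hy']; field_simp; ring
  · rw [hy']; field_simp; ring
  · have h1 : 0 < -(a * b * (δa + δb) / (a + b)) := by
      rw [neg_pos]
      apply div_neg_of_neg_of_pos ?_ (by linarith)
      nlinarith [mul_pos ha hb]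
    have h2 : 0 < 2 * ζ - γ * (δa + δb) := by nlinarith
    exact mul_pos h1 h2
end

section
/- Let Λ be an intensity function. For every p ∈ ℝ, the function δ ↦ Λ(δ)(δ − p) attains its supremum over ℝ at a unique point δ*(p); moreover δ*(p) is the unique real solution δ of the first-order condition δ + Λ(δ)/Λ'(δ) = p. -/
/-- An intensity function in the sense of Guéant (2017): twice continuously
differentiable, positive, with negative derivative, vanishing at `+∞`, and with
`sup_x Λ(x)Λ''(x)/Λ'(x)² < 2`. -/
def IsIntensity (Λ : ℝ → ℝ) : Prop :=
  ContDiff ℝ 2 Λ ∧ (∀ x, 0 < Λ x) ∧ (∀ x, deriv Λ x < 0) ∧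
  Filter.Tendsto Λ Filter.atTop (nhds 0) ∧
  BddAbove (Set.range fun x => Λ x * deriv (deriv Λ) x / (deriv Λ x) ^ 2) ∧
  sSup (Set.range fun x => Λ x * deriv (deriv Λ) x / (deriv Λ x) ^ 2) < 2

set_option maxHeartbeats 1000000 in
/-- **Unique maximizer and first-order characterization.** For an intensity function `Λ`
and every `p ∈ ℝ`, the map `δ ↦ Λ(δ)(δ - p)` attains its supremum over `ℝ` at a unique
point, this point is the unique solution of `δ + Λ(δ)/Λ'(δ) = p`, and being a global
maximizer is equivalent to solving this first-order condition. -/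
theorem intensity_unique_maximizer (Λ : ℝ → ℝ) (hΛ : IsIntensity Λ) (p : ℝ) :
    (∃! d : ℝ, ∀ x : ℝ, Λ x * (x - p) ≤ Λ d * (d - p)) ∧
    (∃! d : ℝ, d + Λ d / deriv Λ d = p) ∧
    (∀ d : ℝ, (∀ x : ℝ, Λ x * (x - p) ≤ Λ d * (d - p)) ↔ d + Λ d / deriv Λ d = p) := by
  obtain ⟨hC2, hpos, hneg, -, hbdd, hsup⟩ := hΛ
  have hne : ∀ x, deriv Λ x ≠ 0 := fun x => (hneg x).ne
  have hdΛ : Differentiable ℝ Λ := hC2.differentiable (by norm_num)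
  have hC1' : ContDiff ℝ 1 (deriv Λ) := by
    have h2 : ContDiff ℝ ((1 : WithTop ℕ∞) + 1) Λ := by
      have e : (1 : WithTop ℕ∞) + 1 = 2 := by norm_num
      rw [e]; exact hC2
    exact (contDiff_succ_iff_deriv.mp h2).2.2
  have hdΛ' : Differentiable ℝ (deriv Λ) := hC1'.differentiable (by norm_num)
  set h : ℝ → ℝ := fun x => Λ x * deriv (deriv Λ) x / (deriv Λ x) ^ 2 with hh
  set S := sSup (Set.range h) with hS
  have hhle : ∀ x, h x ≤ S := fun x => le_csSup hbdd ⟨x, rfl⟩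
  have hc : 0 < 2 - S := by linarith
  set g : ℝ → ℝ := fun x => x + Λ x / deriv Λ x with hgdef
  have hg' : ∀ x, HasDerivAt g (2 - h x) x := by
    intro x
    have h1 := (hdΛ x).hasDerivAt
    have h2 := (hdΛ' x).hasDerivAt
    have h3 := h1.div h2 (hne x)
    have h4 := (hasDerivAt_id x).add h3
    refine HasDerivAt.congr_deriv h4 ?_
    have := hne x
    simp only [hh]
    field_simp
    ring
  have hgderiv : ∀ x, deriv g x = 2 - h x := fun x => (hg' x).deriv
  have hgm : StrictMono g := strictMono_of_deriv_pos (fun x => by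
    rw [hgderiv]; linarith [hhle x])
  have hgc : Continuous g := by
    refine continuous_iff_continuousAt.mpr fun x => ((hg' x).differentiableAt).continuousAt
  -- linear growth: G x = g x - (2 - S) * x is monotone
  have hG' : ∀ x, HasDerivAt (fun y => g y - (2 - S) * y) (2 - h x - (2 - S) * 1) x :=
    fun x => (hg' x).sub ((hasDerivAt_id x).const_mul (2 - S))
  have hGmono : Monotone (fun y => g y - (2 - S) * y) := by
    apply monotone_of_deriv_nonneg (fun x => (hG' x).differentiableAt)
    intro x
    rw [(hG' x).deriv]
    have := hhle x; nlinarith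
  -- find a root of g = p
  set q : ℝ := (p - g 0) / (2 - S) with hq
  have hql : g (min 0 q) ≤ p := by
    have h1 : g (min 0 q) - (2 - S) * (min 0 q) ≤ g 0 - (2 - S) * 0 :=
      hGmono (min_le_left 0 q)
    have h2 : min 0 q ≤ q := min_le_right 0 q
    have : (2 - S) * q = p - g 0 := by rw [hq]; field_simp [hc.ne']
    nlinarith
  have hqr : p ≤ g (max 0 q) := by
    have h1 : g 0 - (2 - S) * 0 ≤ g (max 0 q) - (2 - S) * (max 0 q) :=
      hGmono (le_max_left 0 q)
    have h2 : q ≤ max 0 q := le_max_right 0 q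
    have : (2 - S) * q = p - g 0 := by rw [hq]; field_simp [hc.ne']
    nlinarith
  obtain ⟨d, -, hd⟩ := intermediate_value_Icc (min_le_max (a := (0:ℝ)) (b := q))
    hgc.continuousOn ⟨hql, hqr⟩
  -- hd : g d = p
  have hroot_unique : ∀ y, g y = p → y = d := fun y hy =>
    hgm.injective (hy.trans hd.symm)
  -- the objective f and its derivative
  have hf' : ∀ x, HasDerivAt (fun y => Λ y * (y - p)) (deriv Λ x * (g x - p)) x := by
    intro x
    have h1 := ((hdΛ x).hasDerivAt).mul ((hasDerivAt_id x).sub_const p)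
    refine HasDerivAt.congr_deriv h1 ?_
    have := hne x
    simp only [hgdef, id]
    field_simp
    ring
  have hfc : Continuous (fun y => Λ y * (y - p)) :=
    (hdΛ.continuous).mul (continuous_id.sub continuous_const)
  -- strict maximum at d
  have hmax : ∀ x, x ≠ d → Λ x * (x - p) < Λ d * (d - p) := by
    intro x hx
    rcases lt_or_gt_of_ne hx with hlt | hgt
    · have hmono : StrictMonoOn (fun y => Λ y * (y - p)) (Set.Iic d) := by
        apply strictMonoOn_of_deriv_pos (convex_Iic d) hfc.continuousOn
        intro y hy
        rw [interior_Iic] at hy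
        rw [(hf' y).deriv]
        have : g y < p := hd ▸ hgm hy
        nlinarith [hneg y]
      exact hmono (le_of_lt hlt) (le_refl d) hlt
    · have hanti : StrictAntiOn (fun y => Λ y * (y - p)) (Set.Ici d) := by
        apply strictAntiOn_of_deriv_neg (convex_Ici d) hfc.continuousOn
        intro y hy
        rw [interior_Ici] at hy
        rw [(hf' y).deriv]
        have : p < g y := hd ▸ hgm hy
        nlinarith [hneg y]
      exact hanti (le_refl d) (le_of_lt hgt) hgt
  have hmaximizer : ∀ x, Λ x * (x - p) ≤ Λ d * (d - p) := by
    intro x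
    rcases eq_or_ne x d with rfl | hx
    · exact le_refl _
    · exact (hmax x hx).le
  have hmax_unique : ∀ y, (∀ x, Λ x * (x - p) ≤ Λ y * (y - p)) → y = d := by
    intro y hy
    by_contra hyd
    exact absurd (hy d) (not_le.mpr (hmax y hyd))
  refine ⟨⟨d, hmaximizer, hmax_unique⟩, ⟨d, hd, hroot_unique⟩, fun y => ⟨?_, ?_⟩⟩
  · intro hy; rw [hmax_unique y hy]; exact hd
  · intro hy; rw [hroot_unique y hy]; exact hmaximizer
end

section
/- Let Λ be an intensity function and let δ*(p) denote the unique maximizer over ℝ of δ ↦ Λ(δ)(δ − p) (equivalently, the unique root of δ + Λ(δ)/Λ'(δ) = p). Then δ*: ℝ → ℝ is continuously differentiable and strictly increasing, with (δ*)'(p) = [2 − Λ(δ*(p))Λ''(δ*(p))/Λ'(δ*(p))²]^{-1}, and 0 < (δ*)'(p) ≤ [2 − sup_{u∈ℝ} Λ(u)Λ''(u)/Λ'(u)²]^{-1} for all p; in particular δ* is Lipschitz continuous with this constant. -/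
/-- **Regularity of the maximizer map `δ*`.** If `d : ℝ → ℝ` sends each `p` to the unique
root of `δ + Λ(δ)/Λ'(δ) = p` (equivalently, the unique maximizer of `δ ↦ Λ(δ)(δ-p)`),
then `d` is `C¹` and strictly increasing with
`d'(p) = [2 − Λ(d p)Λ''(d p)/Λ'(d p)²]⁻¹ ∈ (0, (2 − sup ratio)⁻¹]`,
and `d` is Lipschitz with constant `(2 − sup ratio)⁻¹`. -/
theorem intensity_maximizer_map_regularity (Λ : ℝ → ℝ) (hΛ : IsIntensity Λ)
    (d : ℝ → ℝ) (hd : ∀ p : ℝ, d p + Λ (d p) / deriv Λ (d p) = p) :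
    ContDiff ℝ 1 d ∧ StrictMono d ∧
    (∀ p : ℝ,
      deriv d p = (2 - Λ (d p) * deriv (deriv Λ) (d p) / (deriv Λ (d p)) ^ 2)⁻¹ ∧
      0 < deriv d p ∧
      deriv d p
        ≤ (2 - sSup (Set.range fun u => Λ u * deriv (deriv Λ) u / (deriv Λ u) ^ 2))⁻¹) ∧
    (∀ p q : ℝ,
      |d p - d q|
        ≤ (2 - sSup (Set.range fun u => Λ u * deriv (deriv Λ) u / (deriv Λ u) ^ 2))⁻¹
          * |p - q|) := by
  obtain ⟨hC2, hpos, hneg, -, hbdd, hsup⟩ := hΛ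
  set R : ℝ → ℝ := fun x => Λ x * deriv (deriv Λ) x / (deriv Λ x) ^ 2 with hRdef
  set M : ℝ := sSup (Set.range R) with hMdef
  have hRM : ∀ x, R x ≤ M := fun x => le_csSup hbdd ⟨x, rfl⟩
  have h2M : 0 < 2 - M := by linarith
  have hΛ'ne : ∀ x, deriv Λ x ≠ 0 := fun x => (hneg x).ne
  have hdiff : Differentiable ℝ Λ := hC2.differentiable (by norm_num)
  have hC1' : ContDiff ℝ 1 (deriv Λ) := by
    have := (contDiff_succ_iff_deriv (n := 1)).mp (by exact_mod_cast hC2)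
    exact this.2.2
  have hdiff' : Differentiable ℝ (deriv Λ) := hC1'.differentiable (by norm_num)
  have hcont'' : Continuous (deriv (deriv Λ)) := hC1'.continuous_deriv le_rfl
  set f : ℝ → ℝ := fun x => x + Λ x / deriv Λ x with hfdef
  have hd' : ∀ p, f (d p) = p := hd
  have hf' : ∀ x, HasDerivAt f (2 - R x) x := by
    intro x
    have h1 : HasDerivAt Λ (deriv Λ x) x := (hdiff x).hasDerivAt
    have h2 : HasDerivAt (deriv Λ) (deriv (deriv Λ) x) x := (hdiff' x).hasDerivAt
    have h3 := (hasDerivAt_id x).add (h1.div h2 (hΛ'ne x))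
    have hne := hΛ'ne x
    refine h3.congr_deriv ?_
    simp only [hRdef]
    field_simp
    ring
  have hfpos : ∀ x, 0 < 2 - R x := fun x => lt_of_lt_of_le h2M (by linarith [hRM x])
  have hfm : StrictMono f :=
    strictMono_of_deriv_pos fun x => by rw [(hf' x).deriv]; exact hfpos x
  have hdm : StrictMono d := by
    intro p q hpq
    by_contra h
    push_neg at h
    have := hfm.monotone h
    rw [hd', hd'] at this
    linarith
  have hds : Function.Surjective d := fun y =>
    ⟨f y, hfm.injective (by rw [hd'])⟩
  have hcont : Continuous d := by
    have := (StrictMono.orderIsoOfSurjective d hdm hds).toHomeomorph.continuous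
    exact this
  have hdd : ∀ p, HasDerivAt d ((2 - R (d p))⁻¹) p := fun p =>
    HasDerivAt.of_local_left_inverse hcont.continuousAt (hf' (d p)) (hfpos (d p)).ne'
      (Filter.Eventually.of_forall hd')
  have hderiv : ∀ p, deriv d p = (2 - R (d p))⁻¹ := fun p => (hdd p).deriv
  have hRcont : Continuous R := by
    apply Continuous.div (hC2.continuous.mul hcont'')
      ((hC1'.continuous).pow 2)
    exact fun x => pow_ne_zero 2 (hΛ'ne x)
  have hbound : ∀ p, (2 - R (d p))⁻¹ ≤ (2 - M)⁻¹ := by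
    intro p
    gcongr
    exact hRM (d p)
  refine ⟨?_, hdm, fun p => ⟨hderiv p, by rw [hderiv p]; exact inv_pos.mpr (hfpos (d p)), by
    rw [hderiv p]; exact hbound p⟩, ?_⟩
  · rw [contDiff_one_iff_deriv]
    refine ⟨fun p => (hdd p).differentiableAt, ?_⟩
    have : deriv d = fun p => (2 - R (d p))⁻¹ := funext hderiv
    rw [this]
    exact (continuous_const.sub (hRcont.comp hcont)).inv₀ fun p => (hfpos (d p)).ne'
  · intro p q
    have := Convex.norm_image_sub_le_of_norm_hasDerivWithin_le
      (f := d) (f' := fun x => (2 - R (d x))⁻¹) (s := Set.univ)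
      (fun x _ => (hdd x).hasDerivWithinAt)
      (fun x _ => by
        rw [Real.norm_eq_abs, abs_of_pos (inv_pos.mpr (hfpos (d x)))]
        exact hbound x)
      convex_univ (Set.mem_univ q) (Set.mem_univ p)
    simpa [Real.norm_eq_abs] using this
end

section
/- Let Λ^a and Λ^b be intensity functions, let δ^{a*} and δ^{b*} be their maximizer maps (δ^{i*}(p) is the unique root of δ + Λ^i(δ)/(Λ^i)'(δ) = p), let ξ > 0, and write τ(x) = min(max(x, −ξ), ξ). Then for any constants a, b ≥ 0, the function y ↦ −a·Λ^a(τ(δ^{a*}(y))) + b·Λ^b(τ(δ^{b*}(−y))) is nondecreasing on ℝ. -/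
lemma aux_diff {Λ : ℝ → ℝ} (h : ContDiff ℝ 2 Λ) :
    Differentiable ℝ Λ ∧ Differentiable ℝ (deriv Λ) := by
  have h' : ContDiff ℝ ((1 + 1 : ℕ) : ℕ∞) Λ := by exact_mod_cast h
  have := ContDiff.iterate_deriv' 1 1 h'
  simp only [Function.iterate_one] at this
  exact ⟨h.differentiable (by norm_num), this.differentiable (by norm_num)⟩

lemma aux_strictMono {Λ : ℝ → ℝ} (h : IsIntensity Λ) :
    StrictMono (fun x => x + Λ x / deriv Λ x) := by
  obtain ⟨hC, hpos, hneg, -, hbdd, hsup⟩ := h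
  obtain ⟨hd1, hd2⟩ := aux_diff hC
  have key : ∀ x, HasDerivAt (fun x => x + Λ x / deriv Λ x)
      (1 + (deriv Λ x * deriv Λ x - Λ x * deriv (deriv Λ) x) / (deriv Λ x) ^ 2) x := by
    intro x
    exact (hasDerivAt_id x).add (((hd1 x).hasDerivAt.div (hd2 x).hasDerivAt (hneg x).ne))
  have hposderiv : ∀ x,
      0 < 1 + (deriv Λ x * deriv Λ x - Λ x * deriv (deriv Λ) x) / (deriv Λ x) ^ 2 := by
    intro x
    have hv : deriv Λ x ≠ 0 := (hneg x).ne
    have hv2 : (0:ℝ) < (deriv Λ x) ^ 2 := by positivity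
    have hle : Λ x * deriv (deriv Λ) x / (deriv Λ x) ^ 2 < 2 :=
      lt_of_le_of_lt (le_csSup hbdd ⟨x, rfl⟩) hsup
    have h2 : Λ x * deriv (deriv Λ) x < 2 * (deriv Λ x) ^ 2 := by
      rwa [div_lt_iff₀ hv2] at hle
    rw [show 1 + (deriv Λ x * deriv Λ x - Λ x * deriv (deriv Λ) x) / (deriv Λ x) ^ 2
        = (2 * (deriv Λ x) ^ 2 - Λ x * deriv (deriv Λ) x) / (deriv Λ x) ^ 2 by
      field_simp; ring]
    exact div_pos (by linarith) hv2
  refine strictMono_of_deriv_pos ?_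
  intro x
  rw [(key x).deriv]
  exact hposderiv x

lemma aux_antitone {Λ : ℝ → ℝ} (h : IsIntensity Λ) : Antitone Λ := by
  obtain ⟨hC, -, hneg, -⟩ := h
  exact antitone_of_deriv_nonpos (aux_diff hC).1 fun x => (hneg x).le

/-- **Monotonicity of the inventory drift in the adjoint variable.** Let `Λa, Λb` be
intensity functions with maximizer maps `da, db` (where `di p` is the unique root of
`δ + Λi(δ)/Λi'(δ) = p`), let `ξ > 0` and `τ(x) = min (max x (−ξ)) ξ`. Then for any
`a, b ≥ 0` the drift `y ↦ −a·Λa(τ(da y)) + b·Λb(τ(db (−y)))` is nondecreasing. -/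
theorem inventory_drift_monotone (Λa Λb : ℝ → ℝ)
    (hΛa : IsIntensity Λa) (hΛb : IsIntensity Λb)
    (da db : ℝ → ℝ)
    (hda : ∀ p : ℝ, da p + Λa (da p) / deriv Λa (da p) = p)
    (hdb : ∀ p : ℝ, db p + Λb (db p) / deriv Λb (db p) = p)
    (ξ : ℝ) (hξ : 0 < ξ) (a b : ℝ) (ha : 0 ≤ a) (hb : 0 ≤ b) :
    Monotone (fun y : ℝ =>
      -a * Λa (min (max (da y) (-ξ)) ξ) + b * Λb (min (max (db (-y)) (-ξ)) ξ)) := by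
  have hma : Monotone da := by
    intro p q hpq
    by_contra hlt
    push_neg at hlt
    have := aux_strictMono hΛa hlt
    simp only [hda] at this
    exact absurd hpq (not_le.mpr this)
  have hmb : Monotone db := by
    intro p q hpq
    by_contra hlt
    push_neg at hlt
    have := aux_strictMono hΛb hlt
    simp only [hdb] at this
    exact absurd hpq (not_le.mpr this)
  intro y z hyz
  have h1 : min (max (da y) (-ξ)) ξ ≤ min (max (da z) (-ξ)) ξ :=
    min_le_min (max_le_max (hma hyz) le_rfl) le_rfl
  have h2 : min (max (db (-z)) (-ξ)) ξ ≤ min (max (db (-y)) (-ξ)) ξ :=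
    min_le_min (max_le_max (hmb (neg_le_neg hyz)) le_rfl) le_rfl
  have hA : Λa (min (max (da z) (-ξ)) ξ) ≤ Λa (min (max (da y) (-ξ)) ξ) :=
    aux_antitone hΛa h1
  have hB : Λb (min (max (db (-y)) (-ξ)) ξ) ≤ Λb (min (max (db (-z)) (-ξ)) ξ) :=
    aux_antitone hΛb h2
  have := mul_le_mul_of_nonneg_left hA ha
  have := mul_le_mul_of_nonneg_left hB hb
  simp only
  nlinarith
end

section
/- Let T, ζ, γ, A > 0, q₀ ∈ ℝ, and let a: [0,T] → [0,∞) be integrable with total volume X = ∫₀ᵀ a(t) dt. Then there exists a unique pair (Q, Y) with Q: [0,T] → ℝ absolutely continuous and Y ∈ ℝ such that Q(0) = q₀, Q'(t) = −(ζ/2)a(t) + (γ/2)a(t)Y for a.e. t, and Y = −2A·Q(T); it satisfies Q(T) = (2q₀ − ζX)/(2(1 + γA X)), and the resulting terminal ask quote equals ζ/(2γ) + Y/2 = ζ/(2γ) + (ζX − 2q₀)/(2(A^{-1} + γX)). -/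
open intervalIntegral

/-- **Solution of the deterministic ask-side FBSDE with linear intensity.** With only
ask-side flow `a`, no running penalty, and terminal penalty `A`, there is a unique pair
`(Q, Y)` with `Q` given (on `[0,T]`) by the integral form of
`Q' = −(ζ/2)a + (γ/2)aY`, `Q 0 = q₀`, coupled with `Y = −2A·Q T`; it satisfies
`Q T = (2q₀ − ζX)/(2(1 + γAX))` and the terminal ask quote is
`ζ/(2γ) + Y/2 = ζ/(2γ) + (ζX − 2q₀)/(2(A⁻¹ + γX))`, where `X = ∫₀ᵀ a`. -/
theorem linear_impact_fbsde (T ζ γ A q₀ X : ℝ)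
    (hT : 0 < T) (hζ : 0 < ζ) (hγ : 0 < γ) (hA : 0 < A)
    (a : ℝ → ℝ) (ha : ∀ t, 0 ≤ a t)
    (haInt : MeasureTheory.IntegrableOn a (Set.Icc 0 T))
    (hX : X = ∫ t in (0:ℝ)..T, a t) :
    -- existence
    (∃ Q : ℝ → ℝ, ∃ Y : ℝ,
      (∀ t ∈ Set.Icc (0:ℝ) T,
        Q t = q₀ + ∫ s in (0:ℝ)..t, (-(ζ / 2) * a s + γ / 2 * a s * Y)) ∧
      Y = -2 * A * Q T) ∧
    -- uniqueness (of Q on [0,T] and of Y)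
    (∀ Q Q' : ℝ → ℝ, ∀ Y Y' : ℝ,
      ((∀ t ∈ Set.Icc (0:ℝ) T,
          Q t = q₀ + ∫ s in (0:ℝ)..t, (-(ζ / 2) * a s + γ / 2 * a s * Y)) ∧
        Y = -2 * A * Q T) →
      ((∀ t ∈ Set.Icc (0:ℝ) T,
          Q' t = q₀ + ∫ s in (0:ℝ)..t, (-(ζ / 2) * a s + γ / 2 * a s * Y')) ∧
        Y' = -2 * A * Q' T) →
      (∀ t ∈ Set.Icc (0:ℝ) T, Q t = Q' t) ∧ Y = Y') ∧
    -- explicit values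
    (∀ Q : ℝ → ℝ, ∀ Y : ℝ,
      ((∀ t ∈ Set.Icc (0:ℝ) T,
          Q t = q₀ + ∫ s in (0:ℝ)..t, (-(ζ / 2) * a s + γ / 2 * a s * Y)) ∧
        Y = -2 * A * Q T) →
      Q T = (2 * q₀ - ζ * X) / (2 * (1 + γ * A * X)) ∧
      ζ / (2 * γ) + Y / 2 = ζ / (2 * γ) + (ζ * X - 2 * q₀) / (2 * (A⁻¹ + γ * X))) := by
  have hX0 : 0 ≤ X := by
    rw [hX]
    exact intervalIntegral.integral_nonneg hT.le (fun s _ => ha s)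
  set D : ℝ := 1 + γ * A * X with hD
  have hDpos : 0 < D := by positivity
  have hDne : D ≠ 0 := hDpos.ne'
  have key : ∀ (Y t : ℝ),
      (∫ s in (0:ℝ)..t, (-(ζ / 2) * a s + γ / 2 * a s * Y))
        = (-(ζ / 2) + γ / 2 * Y) * ∫ s in (0:ℝ)..t, a s := by
    intro Y t
    rw [← intervalIntegral.integral_const_mul]
    congr 1; funext s; ring
  -- any solution has Y determined
  have hYdet : ∀ (Q : ℝ → ℝ) (Y : ℝ),
      ((∀ t ∈ Set.Icc (0:ℝ) T,
          Q t = q₀ + ∫ s in (0:ℝ)..t, (-(ζ / 2) * a s + γ / 2 * a s * Y)) ∧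
        Y = -2 * A * Q T) → Y = A * (ζ * X - 2 * q₀) / D := by
    intro Q Y ⟨h1, h2⟩
    have hQT := h1 T ⟨le_refl (0:ℝ) |>.trans hT.le, le_rfl⟩
    rw [key, ← hX] at hQT
    rw [hQT] at h2
    field_simp [hD] at h2 ⊢
    linarith [h2]
  set Y₀ : ℝ := A * (ζ * X - 2 * q₀) / D with hY₀
  refine ⟨?_, ?_, ?_⟩
  · refine ⟨fun t => q₀ + ∫ s in (0:ℝ)..t, (-(ζ / 2) * a s + γ / 2 * a s * Y₀), Y₀,
      fun t _ => rfl, ?_⟩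
    show Y₀ = -2 * A * (q₀ + ∫ s in (0:ℝ)..T, (-(ζ / 2) * a s + γ / 2 * a s * Y₀))
    rw [key, ← hX, hY₀]
    field_simp
    ring
  · intro Q Q' Y Y' h h'
    have hY : Y = Y₀ := hYdet Q Y h
    have hY' : Y' = Y₀ := hYdet Q' Y' h'
    refine ⟨fun t ht => ?_, hY.trans hY'.symm⟩
    rw [h.1 t ht, h'.1 t ht, hY, hY']
  · intro Q Y h
    have hY : Y = Y₀ := hYdet Q Y h
    have hQT : Q T = -Y / (2 * A) := by
      have := h.2
      field_simp at this ⊢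
      linarith
    constructor
    · rw [hQT, hY, hY₀]
      field_simp [hD]
      ring
    · rw [hY, hY₀]
      have hAinv : A⁻¹ + γ * X = D / A := by
        field_simp [hD]; ring
      rw [hAinv]
      field_simp
end

section
/- Let ζ, γ, A > 0 and q₀ ∈ ℝ satisfy ζ + 2γA q₀ ≥ 0, and define the price-impact function f(x) = ζ/(2γ) + (ζx − 2q₀)/(2(A^{-1} + γx)) for x ≥ 0. Then f is nondecreasing and concave on [0, ∞); if moreover ζ + 2γA q₀ > 0, then f is strictly increasing and strictly concave on [0, ∞). -/
/-- **Monotonicity and concavity of the linear-model price impact.** For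
`f(x) = ζ/(2γ) + (ζx − 2q₀)/(2(A⁻¹ + γx))` on `[0, ∞)`: if `ζ + 2γAq₀ ≥ 0` then `f` is
nondecreasing and concave there; if `ζ + 2γAq₀ > 0` then `f` is strictly increasing and
strictly concave. -/
theorem linear_price_impact_concave (ζ γ A q₀ : ℝ)
    (hζ : 0 < ζ) (hγ : 0 < γ) (hA : 0 < A)
    (hsign : 0 ≤ ζ + 2 * γ * A * q₀) :
    (MonotoneOn (fun x : ℝ => ζ / (2 * γ) + (ζ * x - 2 * q₀) / (2 * (A⁻¹ + γ * x)))
        (Set.Ici 0) ∧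
      ConcaveOn ℝ (Set.Ici 0)
        (fun x : ℝ => ζ / (2 * γ) + (ζ * x - 2 * q₀) / (2 * (A⁻¹ + γ * x)))) ∧
    (0 < ζ + 2 * γ * A * q₀ →
      StrictMonoOn (fun x : ℝ => ζ / (2 * γ) + (ζ * x - 2 * q₀) / (2 * (A⁻¹ + γ * x)))
          (Set.Ici 0) ∧
        StrictConcaveOn ℝ (Set.Ici 0)
          (fun x : ℝ => ζ / (2 * γ) + (ζ * x - 2 * q₀) / (2 * (A⁻¹ + γ * x)))) := by
  set F : ℝ → ℝ := fun x : ℝ => ζ / (2 * γ) + (ζ * x - 2 * q₀) / (2 * (A⁻¹ + γ * x)) with hF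
  set C : ℝ := ζ + 2 * γ * A * q₀ with hCdef
  have hA0 : (A : ℝ) ≠ 0 := hA.ne'
  have hden : ∀ x : ℝ, 0 ≤ x → 0 < A⁻¹ + γ * x := fun x hx =>
    add_pos_of_pos_of_nonneg (inv_pos.mpr hA) (mul_nonneg hγ.le hx)
  have hder : ∀ x : ℝ, 0 ≤ x → HasDerivAt F (C / (2 * A * (A⁻¹ + γ * x) ^ 2)) x := by
    intro x hx
    have hne : (2 : ℝ) * (A⁻¹ + γ * x) ≠ 0 := (mul_pos two_pos (hden x hx)).ne'
    have h1 : HasDerivAt (fun x : ℝ => ζ * x - 2 * q₀) ζ x := by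
      simpa using ((hasDerivAt_id x).const_mul ζ).sub_const (2 * q₀)
    have h2 : HasDerivAt (fun x : ℝ => 2 * (A⁻¹ + γ * x)) (2 * γ) x := by
      simpa using (((hasDerivAt_id x).const_mul γ).const_add A⁻¹).const_mul 2
    have h3 := (h1.div h2 hne).const_add (ζ / (2 * γ))
    refine h3.congr_deriv ?_
    have hd : A⁻¹ + γ * x ≠ 0 := (hden x hx).ne'
    field_simp
    ring
  have hint : interior (Set.Ici (0 : ℝ)) = Set.Ioi 0 := interior_Ici
  have hderiv : ∀ x ∈ interior (Set.Ici (0 : ℝ)),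
      deriv F x = C / (2 * A * (A⁻¹ + γ * x) ^ 2) := by
    intro x hx
    rw [hint] at hx
    exact (hder x (le_of_lt hx)).deriv
  have hdiff : DifferentiableOn ℝ F (interior (Set.Ici (0 : ℝ))) := by
    intro x hx
    rw [hint] at hx
    exact ((hder x (le_of_lt hx)).differentiableAt).differentiableWithinAt
  have hcont : ContinuousOn F (Set.Ici 0) := by
    apply continuousOn_const.add
    exact ContinuousOn.div (by fun_prop) (by fun_prop)
      (fun x hx => (mul_pos two_pos (hden x hx)).ne')
  constructor
  · constructor
    · refine monotoneOn_of_deriv_nonneg (convex_Ici 0) hcont hdiff ?_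
      intro x hx
      rw [hderiv x hx]
      have h2 : (0:ℝ) < 2 * A * (A⁻¹ + γ * x) ^ 2 := by
        rw [hint] at hx
        have := hden x (le_of_lt hx)
        positivity
      exact div_nonneg hsign h2.le
    · refine AntitoneOn.concaveOn_of_deriv (convex_Ici 0) hcont hdiff ?_
      intro x hx y hy hxy
      rw [hderiv x hx, hderiv y hy]
      rw [hint] at hx hy
      have hdx := hden x (le_of_lt hx)
      have hdy := hden y (le_of_lt hy)
      gcongr
  · intro hpos
    constructor
    · refine strictMonoOn_of_deriv_pos (convex_Ici 0) hcont ?_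
      intro x hx
      rw [hderiv x hx]
      rw [hint] at hx
      have hdx := hden x (le_of_lt hx)
      positivity
    · refine StrictAntiOn.strictConcaveOn_of_deriv (convex_Ici 0) hcont ?_
      intro x hx y hy hxy
      rw [hderiv x hx, hderiv y hy]
      rw [hint] at hx hy
      have hdx := hden x (le_of_lt hx)
      have hdy := hden y (le_of_lt hy)
      gcongr
end

section
/- Let γ, A > 0, q₀ ∈ ℝ, and let f: [0, ∞) → ℝ be the implicit function defined by f(x) + x·exp(2γA f(x) − 1) = q₀. Then f is strictly convex: f''(x) > 0 for all x ≥ 0. Consequently the price-impact function x ↦ 1/γ − 2A·f(x) is strictly concave and strictly increasing on [0, ∞). -/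
open Set Real Filter Topology


/-- **Convexity of the implicit terminal inventory and concavity of the price impact in
the exponential-intensity model.** If `f : [0,∞) → ℝ` satisfies
`f(x) + x·exp(2γA f(x) − 1) = q₀`, then `f` is strictly convex on `[0,∞)` with strictly
positive second derivative (within `[0,∞)`), and consequently the price impact
`x ↦ 1/γ − 2A·f(x)` is strictly concave and strictly increasing on `[0,∞)`. -/
theorem exp_impact_concavity (γ A q₀ : ℝ) (hγ : 0 < γ) (hA : 0 < A)
    (f : ℝ → ℝ)
    (hf : ∀ x : ℝ, 0 ≤ x → f x + x * Real.exp (2 * γ * A * f x - 1) = q₀) :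
    StrictConvexOn ℝ (Set.Ici 0) f ∧
    (∀ x : ℝ, 0 ≤ x →
      0 < derivWithin (fun y => derivWithin f (Set.Ici 0) y) (Set.Ici 0) x) ∧
    StrictConcaveOn ℝ (Set.Ici 0) (fun x => 1 / γ - 2 * A * f x) ∧
    StrictMonoOn (fun x => 1 / γ - 2 * A * f x) (Set.Ici 0) := by
  set c : ℝ := 2 * γ * A with hc
  have hc0 : 0 < c := by positivity
  -- basic consequences of the implicit equation
  have hq : ∀ x : ℝ, 0 ≤ x → f x = q₀ - x * Real.exp (c * f x - 1) := by
    intro x hx; have := hf x hx; linarith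
  have hfle : ∀ x : ℝ, 0 ≤ x → f x ≤ q₀ := by
    intro x hx
    have h1 : 0 ≤ x * Real.exp (c * f x - 1) := by positivity
    have := hq x hx; linarith
  have hD1 : ∀ x : ℝ, 0 ≤ x → (1:ℝ) ≤ 1 + c * x * Real.exp (c * f x - 1) := by
    intro x hx
    have : 0 ≤ c * x * Real.exp (c * f x - 1) := by positivity
    linarith
  -- the inverse function g
  set g : ℝ → ℝ := fun u => (q₀ - u) * Real.exp (1 - c * u) with hg
  have hgf : ∀ x : ℝ, 0 ≤ x → g (f x) = x := by
    intro x hx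
    have h1 : q₀ - f x = x * Real.exp (c * f x - 1) := by have := hq x hx; linarith
    simp only [hg, h1, mul_assoc, ← Real.exp_add]
    norm_num
  have hg' : ∀ u : ℝ, HasDerivAt g (-((1 + c * (q₀ - u)) * Real.exp (1 - c * u))) u := by
    intro u
    have h1 : HasDerivAt (fun u : ℝ => q₀ - u) (-1) u := (hasDerivAt_id u).const_sub q₀
    have h2 : HasDerivAt (fun u : ℝ => Real.exp (1 - c * u)) (Real.exp (1 - c * u) * -(c * 1)) u :=
      (((hasDerivAt_id u).const_mul c).const_sub 1).exp
    have := h1.mul h2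
    refine this.congr_deriv (Eq.symm ?_)
    ring
  -- Lipschitz estimate for f
  set K : ℝ := Real.exp (c * q₀ - 1) with hK
  have hKK : Real.exp (1 - c * q₀) * K = 1 := by
    rw [hK, ← Real.exp_add]; norm_num
  have hGanti : AntitoneOn (fun u => g u + Real.exp (1 - c * q₀) * u) (Iic q₀) := by
    apply antitoneOn_of_hasDerivWithinAt_nonpos (convex_Iic q₀)
      (f' := fun u => -((1 + c * (q₀ - u)) * Real.exp (1 - c * u)) + Real.exp (1 - c * q₀))
    · intro u hu
      exact ((hg' u).add (((hasDerivAt_id u).const_mul (Real.exp (1 - c * q₀))).congr_deriv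
        (by ring))).continuousAt.continuousWithinAt
    · intro u hu
      exact (((hg' u).add (((hasDerivAt_id u).const_mul (Real.exp (1 - c * q₀))).congr_deriv
        (mul_one _))).hasDerivWithinAt)
    · intro u hu
      rw [interior_Iic] at hu
      have hu' : u < q₀ := hu
      have h1 : Real.exp (1 - c * q₀) ≤ Real.exp (1 - c * u) := by
        apply Real.exp_le_exp.2
        nlinarith
      have h2 : (1:ℝ) ≤ 1 + c * (q₀ - u) := by nlinarith
      nlinarith [Real.exp_pos (1 - c * u)]
  have hstep : ∀ x ∈ Ici (0:ℝ), ∀ y ∈ Ici (0:ℝ), f x ≤ f y → f y - f x ≤ K * (x - y) := by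
    intro x hx y hy hxy
    have h1 := hGanti (hfle x hx) (hfle y hy) hxy
    simp only [hgf x hx, hgf y hy] at h1
    have hKpos : 0 < K := Real.exp_pos _
    have h2 : Real.exp (1 - c * q₀) * (f y - f x) ≤ x - y := by nlinarith [h1]
    have h3 := mul_le_mul_of_nonneg_left h2 hKpos.le
    have h4 : K * (Real.exp (1 - c * q₀) * (f y - f x)) = f y - f x := by
      rw [← mul_assoc, mul_comm K, hKK, one_mul]
    linarith
  have hlip : ∀ x ∈ Ici (0:ℝ), ∀ y ∈ Ici (0:ℝ), |f x - f y| ≤ K * |x - y| := by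
    intro x hx y hy
    rcases le_total (f x) (f y) with h | h
    · have := hstep x hx y hy h
      rw [abs_sub_comm]
      rw [abs_of_nonneg (by linarith)]
      calc f y - f x ≤ K * (x - y) := this
        _ ≤ K * |x - y| := by
            apply mul_le_mul_of_nonneg_left (le_abs_self _) (le_of_lt (Real.exp_pos _))
    · have := hstep y hy x hx h
      rw [abs_of_nonneg (by linarith)]
      calc f x - f y ≤ K * (y - x) := this
        _ ≤ K * |x - y| := by
            apply mul_le_mul_of_nonneg_left _ (le_of_lt (Real.exp_pos _))
            rw [abs_sub_comm]; exact le_abs_self _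
  have hcont : ContinuousOn f (Ici 0) := by
    have hKpos : 0 < K := Real.exp_pos _
    have : LipschitzOnWith (Real.toNNReal K) f (Ici 0) := by
      apply LipschitzOnWith.of_dist_le_mul
      intro x hx y hy
      rw [Real.dist_eq, Real.dist_eq, Real.coe_toNNReal K hKpos.le]
      exact hlip x hx y hy
    exact this.continuousOn
  -- derivative of f at positive points
  have hDerivAt : ∀ x : ℝ, 0 < x → HasDerivAt f
      (-Real.exp (c * f x - 1) / (1 + c * x * Real.exp (c * f x - 1))) x := by
    intro x hx
    have hmem : Ici (0:ℝ) ∈ 𝓝 x := Ici_mem_nhds hx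
    have hcontAt : ContinuousAt f x := (hcont x hx.le).continuousAt hmem
    have hQ : q₀ - f x = x * Real.exp (c * f x - 1) := by have := hq x hx.le; linarith
    have hgd : HasDerivAt g (-((1 + c * (q₀ - f x)) * Real.exp (1 - c * f x))) (f x) := hg' (f x)
    have hne : -((1 + c * (q₀ - f x)) * Real.exp (1 - c * f x)) ≠ 0 := by
      have h2 : (1:ℝ) ≤ 1 + c * (q₀ - f x) := by
        rw [hQ]; have := hD1 x hx.le; linarith
      have := Real.exp_pos (1 - c * f x)
      nlinarith
    have hfg : ∀ᶠ y in 𝓝 x, g (f y) = y := by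
      filter_upwards [hmem] with y hy
      exact hgf y hy
    have hd := hgd.of_local_left_inverse hcontAt hne hfg
    refine hd.congr_deriv (Eq.symm ?_)
    have he : Real.exp (1 - c * f x) * Real.exp (c * f x - 1) = 1 := by
      rw [← Real.exp_add]; norm_num
    rw [hQ]
    have hDpos : (0:ℝ) < 1 + c * (x * Real.exp (c * f x - 1)) := by
      have := hD1 x hx.le
      nlinarith
    have hDne : (1 + c * x * Real.exp (c * f x - 1)) ≠ 0 :=
      ne_of_gt (by nlinarith [hD1 x hx.le])
    apply eq_inv_of_mul_eq_one_left
    field_simp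
    linear_combination he
  -- derivative within at 0
  have hf0 : f 0 = q₀ := by have := hq 0 le_rfl; simpa using this
  have hDeriv0 : HasDerivWithinAt f
      (-Real.exp (c * f 0 - 1) / (1 + c * 0 * Real.exp (c * f 0 - 1))) (Ici 0) 0 := by
    have hval : -Real.exp (c * f 0 - 1) / (1 + c * 0 * Real.exp (c * f 0 - 1))
        = -Real.exp (c * f 0 - 1) := by norm_num
    rw [hval, hasDerivWithinAt_iff_tendsto_slope]
    have htf : Tendsto f (𝓝[Ici 0 \ {0}] 0) (𝓝 (f 0)) := by
      apply ((hcont 0 Set.self_mem_Ici).tendsto).mono_left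
      exact nhdsWithin_mono _ diff_subset
    have ht : Tendsto (fun y => -Real.exp (c * f y - 1)) (𝓝[Ici 0 \ {0}] 0)
        (𝓝 (-Real.exp (c * f 0 - 1))) := by
      exact (((Real.continuous_exp.continuousAt).comp
        (by fun_prop : Continuous fun t : ℝ => c * t - 1).continuousAt).tendsto.comp htf).neg
    apply ht.congr'
    filter_upwards [self_mem_nhdsWithin] with y hy
    obtain ⟨hy0, hyne⟩ := hy
    have hyne' : (y:ℝ) ≠ 0 := hyne
    rw [slope_def_field]
    have hfy : f y - f 0 = -(y * Real.exp (c * f y - 1)) := by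
      have := hq y hy0; rw [hf0]; linarith
    rw [hfy]
    field_simp
    ring
  have hDeriv : ∀ x ∈ Ici (0:ℝ), HasDerivWithinAt f
      (-Real.exp (c * f x - 1) / (1 + c * x * Real.exp (c * f x - 1))) (Ici 0) x := by
    intro x hx
    rcases eq_or_lt_of_le (show (0:ℝ) ≤ x from hx) with h | h
    · subst h; exact hDeriv0
    · exact (hDerivAt x h).hasDerivWithinAt
  -- positivity of the second-derivative formula
  have hψpos : ∀ x : ℝ, 0 ≤ x → 0 < c * Real.exp (c * f x - 1) ^ 2 *
      (1 + c * x * Real.exp (c * f x - 1) + 1) / (1 + c * x * Real.exp (c * f x - 1)) ^ 3 := by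
    intro x hx
    have h1 := hD1 x hx
    have he := Real.exp_pos (c * f x - 1)
    apply div_pos
    · apply mul_pos (by positivity)
      linarith
    · apply pow_pos
      linarith
  -- derivative of the derivative formula
  have hDeriv2 : ∀ x ∈ Ici (0:ℝ), HasDerivWithinAt
      (fun y => -Real.exp (c * f y - 1) / (1 + c * y * Real.exp (c * f y - 1)))
      (c * Real.exp (c * f x - 1) ^ 2 * (1 + c * x * Real.exp (c * f x - 1) + 1) /
        (1 + c * x * Real.exp (c * f x - 1)) ^ 3) (Ici 0) x := by
    intro x hx
    have hfd := hDeriv x hx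
    have hDne : (1 + c * x * Real.exp (c * f x - 1)) ≠ 0 :=
      ne_of_gt (by nlinarith [hD1 x hx])
    have hE : HasDerivWithinAt (fun y => Real.exp (c * f y - 1))
        (Real.exp (c * f x - 1) * (c * (-Real.exp (c * f x - 1) /
          (1 + c * x * Real.exp (c * f x - 1))))) (Ici 0) x :=
      ((hfd.const_mul c).sub_const 1).exp
    have hDen : HasDerivWithinAt (fun y => 1 + c * y * Real.exp (c * f y - 1))
        (c * 1 * Real.exp (c * f x - 1) + c * x * (Real.exp (c * f x - 1) *
          (c * (-Real.exp (c * f x - 1) / (1 + c * x * Real.exp (c * f x - 1))))))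
        (Ici 0) x := by
      exact (((hasDerivWithinAt_id x (Ici 0)).const_mul c).mul hE).const_add 1
    have := hE.neg.div hDen hDne
    refine this.congr_deriv (Eq.symm ?_)
    simp only [Pi.neg_apply]
    have hDne' : 1 + c * Real.exp (c * f x - 1) * x ≠ 0 := by rwa [mul_right_comm] at hDne
    field_simp
    ring
  have hDeriv2At : ∀ x : ℝ, 0 < x → HasDerivAt
      (fun y => -Real.exp (c * f y - 1) / (1 + c * y * Real.exp (c * f y - 1)))
      (c * Real.exp (c * f x - 1) ^ 2 * (1 + c * x * Real.exp (c * f x - 1) + 1) /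
        (1 + c * x * Real.exp (c * f x - 1)) ^ 3) x := by
    intro x hx
    exact (hDeriv2 x hx.le).hasDerivAt (Ici_mem_nhds hx)
  -- the second claim
  have hsecond : ∀ x : ℝ, 0 ≤ x →
      0 < derivWithin (fun y => derivWithin f (Set.Ici 0) y) (Set.Ici 0) x := by
    intro x hx
    have hdw : ∀ y ∈ Ici (0:ℝ), derivWithin f (Ici 0) y
        = -Real.exp (c * f y - 1) / (1 + c * y * Real.exp (c * f y - 1)) :=
      fun y hy => (hDeriv y hy).derivWithin (uniqueDiffOn_Ici 0 y hy)
    rw [derivWithin_congr (fun y hy => hdw y hy) (hdw x hx)]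
    rw [(hDeriv2 x hx).derivWithin (uniqueDiffOn_Ici 0 x hx)]
    exact hψpos x hx
  -- strict convexity
  have hconv : StrictConvexOn ℝ (Ici (0:ℝ)) f := by
    apply strictConvexOn_of_deriv2_pos (convex_Ici 0) hcont
    intro x hx
    rw [interior_Ici] at hx
    have hev : deriv f =ᶠ[𝓝 x] fun y => -Real.exp (c * f y - 1) /
        (1 + c * y * Real.exp (c * f y - 1)) := by
      filter_upwards [Ioi_mem_nhds hx] with y hy
      exact (hDerivAt y hy).deriv
    show 0 < deriv (deriv f) x
    rw [hev.deriv_eq, (hDeriv2At x hx).deriv]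
    exact hψpos x hx.le
  -- strict antitonicity of f
  have hanti : StrictAntiOn f (Ici (0:ℝ)) := by
    apply strictAntiOn_of_deriv_neg (convex_Ici 0) hcont
    intro x hx
    rw [interior_Ici] at hx
    rw [(hDerivAt x hx).deriv]
    apply div_neg_of_neg_of_pos
    · simpa using Real.exp_pos (c * f x - 1)
    · nlinarith [hD1 x hx.le]
  refine ⟨hconv, hsecond, ⟨convex_Ici 0, ?_⟩, ?_⟩
  · intro x hx y hy hxy a b ha hb hab
    have h := hconv.2 hx hy hxy ha hb hab
    simp only [smul_eq_mul] at h ⊢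
    have h1γ : a * (1 / γ) + b * (1 / γ) = 1 / γ := by
      field_simp
      linarith
    nlinarith [mul_lt_mul_of_pos_left h (by positivity : (0:ℝ) < 2 * A), h1γ]
  · intro x hx y hy hxy
    have h := hanti hx hy hxy
    simp only
    nlinarith [mul_lt_mul_of_pos_left h (by positivity : (0:ℝ) < 2 * A)]
end
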